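/- arXiv:0805.3950 — 2 statements merged into one kernel-verified Lean document; each statement's English description precedes it below -/
import Mathlib

section
/- Suppose x is a bounded real sequence whose set of sub-limits S(x) = {a_1, a_2, …, a_m} is finite (with the a_j pairwise distinct). Then for every Banach limit L, ∑_{a_j > 0} a_j·w_l(a_j) + ∑_{a_j < 0} a_j·w^u(a_j) ≤ L(x) ≤ ∑_{a_j > 0} a_j·w^u(a_j) + ∑_{a_j < 0} a_j·w_l(a_j). -/
/-!
Off finitely many indices, ℕ is partitioned, up to finite sets, by the ranges `R_j` of the
essential subsequences: an index outside all of them would lead, by Bolzano–Weierstrass, to a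
subsequence converging to some `a_j` that avoids the essential subsequence of `a_j`, and two
ranges meet only finitely often since their subsequences have distinct limits. As `x` tends to
`a_j` along `R_j`, the sequence `x - ∑ a_j 1_{R_j}` is null, and a Banach limit, being
shift-invariant and positive, sends null sequences to `0`; hence `L x = ∑ a_j L(1_{R_j})`.
Shift invariance also lets `L(1_{R_j})` be computed on window sums of length `n`, which are the
window counts of `R_j`; so `L(1_{R_j})` lies between `w_l(a_j)` and `w^u(a_j)`, and multiplying
by `a_j` (whose sign decides which bound is which) gives the two estimates.
-/

open Filter

/-- A bounded real sequence. -/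
def IsBddSeq (x : ℕ → ℝ) : Prop := ∃ C : ℝ, ∀ n, |x n| ≤ C

/-- The sup norm of a (bounded) real sequence. -/
noncomputable def supNorm (x : ℕ → ℝ) : ℝ := ⨆ n, |x n|

/-- A Banach limit: a linear functional on the space of bounded real sequences
(extended arbitrarily to all sequences) that is positive, shift-invariant,
and sends the constant-one sequence to `1`. -/
def IsBanachLimit (L : (ℕ → ℝ) → ℝ) : Prop :=
  (∀ x y : ℕ → ℝ, IsBddSeq x → IsBddSeq y → L (x + y) = L x + L y) ∧
  (∀ (c : ℝ) (x : ℕ → ℝ), IsBddSeq x → L (c • x) = c * L x) ∧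
  (∀ x : ℕ → ℝ, IsBddSeq x → (∀ n, 0 ≤ x n) → 0 ≤ L x) ∧
  (∀ x : ℕ → ℝ, IsBddSeq x → L (fun n => x (n + 1)) = L x) ∧
  L (fun _ => 1) = 1

/-- A bounded sequence is almost convergent if all Banach limits agree on it. -/
def AlmostConvergent (x : ℕ → ℝ) : Prop :=
  ∃ c : ℝ, ∀ L : (ℕ → ℝ) → ℝ, IsBanachLimit L → L x = c

/-- `a` is a sub-limit of `x` if some subsequence of `x` converges to `a`. -/
def IsSubLimit (x : ℕ → ℝ) (a : ℝ) : Prop :=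
  ∃ n : ℕ → ℕ, StrictMono n ∧ Tendsto (fun k => x (n k)) atTop (nhds a)

/-- The set of all sub-limits of `x`. -/
def subLimitSet (x : ℕ → ℝ) : Set ℝ := {a | IsSubLimit x a}

/-- `A({k : i ≤ n_k ≤ i + len - 1})`: the number of indices of the subsequence
given by `n` falling in the window `[i, i + len - 1]`. -/
noncomputable def windowCount (n : ℕ → ℕ) (i len : ℕ) : ℕ :=
  {k : ℕ | i ≤ n k ∧ n k < i + len}.ncard

/-- Upper weight of a subsequence with index map `n`. -/
noncomputable def upperWeight (n : ℕ → ℕ) : ℝ :=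
  limsup (fun len : ℕ => ⨆ i : ℕ, (windowCount n i len : ℝ) / len) atTop

/-- Lower weight of a subsequence with index map `n`. -/
noncomputable def lowerWeight (n : ℕ → ℕ) : ℝ :=
  liminf (fun len : ℕ => ⨅ i : ℕ, (windowCount n i len : ℝ) / len) atTop

/-- `n` indexes an essential subsequence of `x` for the sub-limit `a`:
it converges to `a` and every subsequence of `x` converging to `a` has all
but finitely many of its indices among the `n k`. -/
def IsEssentialSubseq (x : ℕ → ℝ) (a : ℝ) (n : ℕ → ℕ) : Prop :=
  StrictMono n ∧ Tendsto (fun k => x (n k)) atTop (nhds a) ∧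
  ∀ m : ℕ → ℕ, StrictMono m → Tendsto (fun t => x (m t)) atTop (nhds a) →
    {t : ℕ | ¬ ∃ k, n k = m t}.Finite

/-- The weight `w(a)` of a sub-limit `a` of `x` exists and equals `w`:
some essential subsequence of `a` has upper weight and lower weight both `w`. -/
def HasSubLimitWeight (x : ℕ → ℝ) (a : ℝ) (w : ℝ) : Prop :=
  ∃ n : ℕ → ℕ, IsEssentialSubseq x a n ∧ upperWeight n = w ∧ lowerWeight n = w

/-- `A({k : x(k+i) ∈ S, k = 0, …, len-1})`. -/
noncomputable def seqCount (x : ℕ → ℝ) (S : Set ℝ) (i len : ℕ) : ℕ :=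
  {k : ℕ | k < len ∧ x (k + i) ∈ S}.ncard

/-- The weight of `x` with respect to `S` exists and equals `w`:
`A({k : x(k+i) ∈ S, k = 0,…,n-1})/n → w` as `n → ∞`, uniformly in `i`. -/
def HasSetWeight (x : ℕ → ℝ) (S : Set ℝ) (w : ℝ) : Prop :=
  ∀ ε : ℝ, 0 < ε → ∃ N : ℕ, ∀ n ≥ N, ∀ i : ℕ,
    |(seqCount x S i n : ℝ) / n - w| < ε

/-- `x` is properly distributed: every Borel subset of `[-‖x‖∞, ‖x‖∞]`
has a weight with respect to `x`. -/
def ProperlyDistributed (x : ℕ → ℝ) : Prop :=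
  ∀ S : Set ℝ, MeasurableSet S → S ⊆ Set.Icc (-(supNorm x)) (supNorm x) →
    ∃ w : ℝ, HasSetWeight x S w

/-- `s` is simply distributed: it takes finitely many values, and each value
has a weight with respect to `s`. -/
def SimplyDistributed (s : ℕ → ℝ) : Prop :=
  (Set.range s).Finite ∧ ∀ a ∈ Set.range s, ∃ w : ℝ, HasSetWeight s {a} w


open Set Topology
open scoped ENNReal

section BoundedSequences

variable {x y : ℕ → ℝ}

theorem isBddSeq_iff_memℓp : IsBddSeq x ↔ Memℓp x ∞ := by
  simp only [IsBddSeq, memℓp_infty_iff, Real.norm_eq_abs, bddAbove_def, forall_mem_range]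

theorem IsBddSeq.sub (hx : IsBddSeq x) (hy : IsBddSeq y) : IsBddSeq (x - y) :=
  isBddSeq_iff_memℓp.2 <| (isBddSeq_iff_memℓp.1 hx).sub (isBddSeq_iff_memℓp.1 hy)

theorem IsBddSeq.const_smul (hx : IsBddSeq x) (c : ℝ) : IsBddSeq (c • x) :=
  isBddSeq_iff_memℓp.2 <| (isBddSeq_iff_memℓp.1 hx).const_smul c

theorem IsBddSeq.finsetSum {ι : Type*} (s : Finset ι) {f : ι → ℕ → ℝ}
    (hf : ∀ i ∈ s, IsBddSeq (f i)) : IsBddSeq (∑ i ∈ s, f i) := by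
  rw [isBddSeq_iff_memℓp, Finset.sum_fn]
  exact Memℓp.finsetSum s fun i hi => isBddSeq_iff_memℓp.1 (hf i hi)

theorem IsBddSeq.comp_add_right (hx : IsBddSeq x) (k : ℕ) : IsBddSeq fun n => x (n + k) :=
  let ⟨C, hC⟩ := hx
  ⟨C, fun n => hC (n + k)⟩

theorem IsBddSeq.windowSum (hx : IsBddSeq x) (n : ℕ) :
    IsBddSeq fun i => ∑ k ∈ Finset.range n, x (i + k) := by
  simpa only [Finset.sum_fn] using
    IsBddSeq.finsetSum (Finset.range n) fun k _ => hx.comp_add_right k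

theorem isBddSeq_const (c : ℝ) : IsBddSeq fun _ => c :=
  ⟨|c|, fun _ => le_rfl⟩

theorem isBddSeq_indicator_one (s : Set ℕ) : IsBddSeq (s.indicator 1) :=
  ⟨1, fun n => by by_cases h : n ∈ s <;> simp [h]⟩

theorem IsBddSeq.isBounded_range (hx : IsBddSeq x) : Bornology.IsBounded (range x) :=
  let ⟨C, hC⟩ := hx
  isBounded_iff_forall_norm_le.2 ⟨C, forall_mem_range.2 hC⟩

end BoundedSequences

namespace IsBanachLimit

variable {L : (ℕ → ℝ) → ℝ} {x y : ℕ → ℝ}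

theorem map_add (hL : IsBanachLimit L) (hx : IsBddSeq x) (hy : IsBddSeq y) :
    L (x + y) = L x + L y :=
  hL.1 x y hx hy

theorem map_smul (hL : IsBanachLimit L) (c : ℝ) (hx : IsBddSeq x) : L (c • x) = c * L x :=
  hL.2.1 c x hx

theorem map_sub (hL : IsBanachLimit L) (hx : IsBddSeq x) (hy : IsBddSeq y) :
    L (x - y) = L x - L y := by
  rw [sub_eq_add_neg, ← neg_one_smul ℝ y, hL.map_add hx (hy.const_smul _), hL.map_smul _ hy]
  ring

theorem map_sum (hL : IsBanachLimit L) {ι : Type*} (s : Finset ι) {f : ι → ℕ → ℝ}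
    (hf : ∀ i ∈ s, IsBddSeq (f i)) : L (∑ i ∈ s, f i) = ∑ i ∈ s, L (f i) := by
  classical
  induction s using Finset.induction_on with
  | empty =>
    simpa using hL.map_smul 0 (isBddSeq_const 0)
  | insert i s hi ih =>
    rw [Finset.forall_mem_insert] at hf
    rw [Finset.sum_insert hi, Finset.sum_insert hi,
      hL.map_add hf.1 (IsBddSeq.finsetSum s hf.2), ih hf.2]

theorem apply_const (hL : IsBanachLimit L) (c : ℝ) : L (fun _ => c) = c := by
  have hc : (fun _ : ℕ => c) = c • fun _ => (1 : ℝ) := by ext; simp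
  rw [hc, hL.map_smul c (isBddSeq_const 1), hL.2.2.2.2, mul_one]

theorem mono (hL : IsBanachLimit L) (hx : IsBddSeq x) (hy : IsBddSeq y) (h : x ≤ y) :
    L x ≤ L y :=
  sub_nonneg.1 <| hL.map_sub hy hx ▸ hL.2.2.1 _ (hy.sub hx) fun n => sub_nonneg.2 (h n)

theorem apply_comp_add_right (hL : IsBanachLimit L) (hx : IsBddSeq x) (k : ℕ) :
    L (fun n => x (n + k)) = L x := by
  induction k with
  | zero => rfl
  | succ k ih =>
    simp_rw [← add_assoc, add_right_comm _ k 1]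
    exact (hL.2.2.2.1 _ (hx.comp_add_right k)).trans ih

theorem apply_le_of_eventually_le (hL : IsBanachLimit L) (hx : IsBddSeq x) {u : ℝ}
    (h : ∀ᶠ n in atTop, x n ≤ u) : L x ≤ u := by
  obtain ⟨N, hN⟩ := eventually_atTop.1 h
  rw [← hL.apply_comp_add_right hx N, ← hL.apply_const u]
  exact hL.mono (hx.comp_add_right N) (isBddSeq_const u) fun n => hN _ (Nat.le_add_left N n)

theorem le_apply_of_eventually_le (hL : IsBanachLimit L) (hx : IsBddSeq x) {u : ℝ}
    (h : ∀ᶠ n in atTop, u ≤ x n) : u ≤ L x := by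
  obtain ⟨N, hN⟩ := eventually_atTop.1 h
  rw [← hL.apply_comp_add_right hx N, ← hL.apply_const u]
  exact hL.mono (isBddSeq_const u) (hx.comp_add_right N) fun n => hN _ (Nat.le_add_left N n)

theorem apply_eq_of_tendsto (hL : IsBanachLimit L) (hx : IsBddSeq x) {c : ℝ}
    (h : Tendsto x atTop (𝓝 c)) : L x = c := by
  refine le_antisymm (le_of_forall_pos_le_add fun ε hε => ?_)
    (le_of_forall_pos_le_add fun ε hε => ?_)
  · exact hL.apply_le_of_eventually_le hx (h.eventually (ge_mem_nhds (lt_add_of_pos_right c hε)))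
  · rw [← sub_le_iff_le_add]
    exact hL.le_apply_of_eventually_le hx (h.eventually (le_mem_nhds (sub_lt_self c hε)))

theorem apply_windowSum (hL : IsBanachLimit L) (hx : IsBddSeq x) (n : ℕ) :
    L (fun i => ∑ k ∈ Finset.range n, x (i + k)) = n * L x := by
  rw [← Finset.sum_fn, hL.map_sum _ fun k _ => hx.comp_add_right k]
  simp [hL.apply_comp_add_right hx]

theorem apply_le_of_windowSum_le (hL : IsBanachLimit L) (hx : IsBddSeq x) {n : ℕ} (hn : 0 < n)
    {u : ℝ} (h : ∀ i, ∑ k ∈ Finset.range n, x (i + k) ≤ n * u) : L x ≤ u := by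
  refine le_of_mul_le_mul_left ?_ (Nat.cast_pos.2 hn)
  rw [← hL.apply_windowSum hx, ← hL.apply_const (n * u)]
  exact hL.mono (hx.windowSum n) (isBddSeq_const _) h

theorem le_apply_of_le_windowSum (hL : IsBanachLimit L) (hx : IsBddSeq x) {n : ℕ} (hn : 0 < n)
    {u : ℝ} (h : ∀ i, n * u ≤ ∑ k ∈ Finset.range n, x (i + k)) : u ≤ L x := by
  refine le_of_mul_le_mul_left ?_ (Nat.cast_pos.2 hn)
  rw [← hL.apply_windowSum hx, ← hL.apply_const (n * u)]
  exact hL.mono (isBddSeq_const _) (hx.windowSum n) h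

end IsBanachLimit

section Weights

variable {f : ℕ → ℕ}

theorem windowCount_eq_sum_indicator (hf : Function.Injective f) (i n : ℕ) :
    (windowCount f i n : ℝ) = ∑ k ∈ Finset.range n, (range f).indicator 1 (i + k) := by
  classical
  have hpre : {k | i ≤ f k ∧ f k < i + n} = f ⁻¹' Ico i (i + n) := rfl
  have hcount : range f ∩ Ico i (i + n) = ↑((Finset.Ico i (i + n)).filter (· ∈ range f)) := by
    ext t
    simp [and_comm]
  rw [windowCount, hpre, ← ncard_image_of_injective _ hf, image_preimage_eq_range_inter, hcount,
    ncard_coe_finset, ← Finset.sum_boole, Finset.sum_Ico_eq_sum_range, add_tsub_cancel_left]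
  simp [indicator_apply]

theorem windowCount_le (hf : Function.Injective f) (i n : ℕ) : windowCount f i n ≤ n := by
  calc windowCount f i n ≤ (Ico i (i + n)).ncard :=
        ncard_le_ncard_of_injOn f (fun _ hk => hk) hf.injOn (finite_Ico _ _)
    _ = n := by rw [ncard_Ico_nat, add_tsub_cancel_left]

theorem IsBanachLimit.le_upperWeight {L : (ℕ → ℝ) → ℝ} (hL : IsBanachLimit L)
    (hf : Function.Injective f) : L ((range f).indicator 1) ≤ upperWeight f := by
  have hratio_le_one (n i : ℕ) : (windowCount f i n : ℝ) / n ≤ 1 :=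
    div_le_one_of_le₀ (by exact_mod_cast windowCount_le hf i n) n.cast_nonneg
  have hbdd (n : ℕ) : BddAbove (range fun i => (windowCount f i n : ℝ) / n) :=
    ⟨1, forall_mem_range.2 (hratio_le_one n)⟩
  refine le_limsup_of_frequently_le (Eventually.frequently ?_)
    (isBoundedUnder_of ⟨1, fun n => ciSup_le (hratio_le_one n)⟩)
  filter_upwards [eventually_gt_atTop 0] with n hn
  refine hL.apply_le_of_windowSum_le (isBddSeq_indicator_one _) hn fun i => ?_
  rw [← windowCount_eq_sum_indicator hf, ← div_le_iff₀' (Nat.cast_pos.2 hn)]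
  exact le_ciSup (hbdd n) i

theorem IsBanachLimit.lowerWeight_le {L : (ℕ → ℝ) → ℝ} (hL : IsBanachLimit L)
    (hf : Function.Injective f) : lowerWeight f ≤ L ((range f).indicator 1) := by
  have hbdd (n : ℕ) : BddBelow (range fun i => (windowCount f i n : ℝ) / n) :=
    ⟨0, forall_mem_range.2 fun i => by positivity⟩
  refine liminf_le_of_frequently_le (Eventually.frequently ?_)
    (isBoundedUnder_of ⟨0, fun n => Real.iInf_nonneg fun i => by positivity⟩)
  filter_upwards [eventually_gt_atTop 0] with n hn
  refine hL.le_apply_of_le_windowSum (isBddSeq_indicator_one _) hn fun i => ?_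
  rw [← windowCount_eq_sum_indicator hf, ← le_div_iff₀' (Nat.cast_pos.2 hn)]
  exact ciInf_le (hbdd n) i

end Weights

section SubLimits

theorem map_atTop_eq_inf_principal_range {e : ℕ → ℕ} (he : Function.Injective e) :
    map e atTop = atTop ⊓ 𝓟 (range e) := by
  rw [← Nat.cofinite_eq_atTop, ← Filter.map_comap, he.comap_cofinite_eq]

theorem tendsto_inf_principal_range {α : Type*} {x : ℕ → α} {l : Filter α} {e : ℕ → ℕ}
    (he : Function.Injective e) (h : Tendsto (x ∘ e) atTop l) :
    Tendsto x (atTop ⊓ 𝓟 (range e)) l := by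
  rwa [← map_atTop_eq_inf_principal_range he, tendsto_map'_iff]

theorem finite_range_inter_range_of_tendsto {X : Type*} [TopologicalSpace X] [T2Space X]
    {x : ℕ → X} {e e' : ℕ → ℕ} {a a' : X} (he : Function.Injective e)
    (he' : Function.Injective e') (h : Tendsto (x ∘ e) atTop (𝓝 a))
    (h' : Tendsto (x ∘ e') atTop (𝓝 a')) (hne : a ≠ a') : (range e ∩ range e').Finite := by
  by_contra hinf
  have : (atTop ⊓ 𝓟 (range e ∩ range e')).NeBot := by
    rwa [← Nat.cofinite_eq_atTop, cofinite_inf_principal_neBot_iff]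
  refine hne (tendsto_nhds_unique (f := x) (l := atTop ⊓ 𝓟 (range e ∩ range e')) ?_ ?_)
  · exact (tendsto_inf_principal_range he h).mono_left (inf_le_inf_left _ (by simp))
  · exact (tendsto_inf_principal_range he' h').mono_left (inf_le_inf_left _ (by simp))

theorem IsBddSeq.exists_strictMono_mem_tendsto {x : ℕ → ℝ} (hx : IsBddSeq x) {T : Set ℕ}
    (hT : T.Infinite) :
    ∃ φ : ℕ → ℕ, StrictMono φ ∧ (∀ k, φ k ∈ T) ∧ ∃ b, Tendsto (x ∘ φ) atTop (𝓝 b) := by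
  obtain ⟨b, -, ψ, hψ, hb⟩ :=
    tendsto_subseq_of_bounded hx.isBounded_range fun k => mem_range_self (Nat.nth (· ∈ T) k)
  exact ⟨Nat.nth (· ∈ T) ∘ ψ, (Nat.nth_strictMono hT).comp hψ,
    fun k => Nat.nth_mem_of_infinite hT _, b, hb⟩

theorem IsBddSeq.finite_compl_iUnion_range {ι : Type*} {x : ℕ → ℝ} (hx : IsBddSeq x)
    {a : ι → ℝ} (hS : subLimitSet x ⊆ range a) {e : ι → ℕ → ℕ}
    (he : ∀ i, IsEssentialSubseq x (a i) (e i)) : (⋃ i, range (e i))ᶜ.Finite := by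
  by_contra hinf
  obtain ⟨φ, hφ, hφT, b, hb⟩ := hx.exists_strictMono_mem_tendsto hinf
  obtain ⟨i, rfl⟩ := hS ⟨φ, hφ, hb⟩
  refine infinite_univ (((he i).2.2 φ hφ hb).subset fun t _ ⟨k, hk⟩ => ?_)
  exact hφT t (mem_iUnion.2 ⟨i, k, hk⟩)

theorem atTop_le_iSup_inf_principal {ι : Type*} [Finite ι] {R : ι → Set ℕ}
    (hR : (⋃ i, R i)ᶜ.Finite) : atTop ≤ ⨆ i, atTop ⊓ 𝓟 (R i) := by
  intro s hs
  simp only [mem_iSup, mem_inf_principal] at hs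
  have hcover : ∀ᶠ t in atTop, t ∈ ⋃ i, R i := by
    have := hR.compl_mem_cofinite
    rwa [compl_compl, Nat.cofinite_eq_atTop] at this
  filter_upwards [eventually_all.2 hs, hcover] with t hts htR
  obtain ⟨i, hi⟩ := mem_iUnion.1 htR
  exact hts i hi

theorem tendsto_sub_sum_indicator_range {ι : Type*} [Fintype ι] {x : ℕ → ℝ} {a : ι → ℝ}
    (ha : Function.Injective a) {e : ι → ℕ → ℕ} (he : ∀ i, Function.Injective (e i))
    (hlim : ∀ i, Tendsto (x ∘ e i) atTop (𝓝 (a i))) (hcover : (⋃ i, range (e i))ᶜ.Finite) :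
    Tendsto (x - ∑ i, a i • (range (e i)).indicator 1) atTop (𝓝 0) := by
  refine (tendsto_iSup.2 fun i => ?_).mono_left (atTop_le_iSup_inf_principal hcover)
  have hdisjoint : ∀ᶠ t in atTop ⊓ 𝓟 (range (e i)), ∀ j, j ≠ i → t ∉ range (e j) := by
    refine eventually_all.2 fun j => ?_
    by_cases hji : j = i
    · exact Eventually.of_forall fun _ h => absurd hji h
    have hfin := finite_range_inter_range_of_tendsto (he i) (he j) (hlim i) (hlim j)
      (ha.ne (Ne.symm hji))
    have hcofinite := hfin.compl_mem_cofinite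
    rw [Nat.cofinite_eq_atTop] at hcofinite
    filter_upwards [mem_inf_of_left hcofinite, mem_inf_of_right (mem_principal_self _)]
      with t ht hti _ htj
    exact ht ⟨hti, htj⟩
  have hsum : ∀ᶠ t in atTop ⊓ 𝓟 (range (e i)), (∑ j, a j • (range (e j)).indicator 1) t = a i := by
    filter_upwards [hdisjoint, mem_inf_of_right (mem_principal_self _)] with t ht hti
    rw [Finset.sum_apply, Finset.sum_eq_single i (fun j _ hj => by simp [ht j hj])
      (by simp)]
    simp [hti]
  have := (tendsto_inf_principal_range (he i) (hlim i)).sub_const (a i)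
  rw [sub_self] at this
  refine this.congr' ?_
  filter_upwards [hsum] with t ht
  simp [ht]

end SubLimits

theorem ite_mul_le_mul_and_mul_le_ite {a lo c hi : ℝ} (hlo : lo ≤ c) (hhi : c ≤ hi) :
    (if 0 < a then a * lo else a * hi) ≤ a * c ∧ a * c ≤ if 0 < a then a * hi else a * lo := by
  split_ifs with ha
  · exact ⟨by gcongr, by gcongr⟩
  · have ha : a ≤ 0 := not_lt.1 ha
    exact ⟨mul_le_mul_of_nonpos_left hhi ha, mul_le_mul_of_nonpos_left hlo ha⟩

/-- If the sub-limit set of a bounded sequence `x` is finite,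
`{a 0, …, a (m-1)}`, then every Banach limit of `x` is bounded below by
`∑_{a_j > 0} a_j w_l(a_j) + ∑_{a_j < 0} a_j w^u(a_j)` and above by
`∑_{a_j > 0} a_j w^u(a_j) + ∑_{a_j < 0} a_j w_l(a_j)`. -/
theorem banachLimit_bounds_of_finite_subLimitSet (x : ℕ → ℝ) (hx : IsBddSeq x)
    (m : ℕ) (a : Fin m → ℝ) (hinj : Function.Injective a)
    (hS : subLimitSet x = Set.range a)
    (e : Fin m → ℕ → ℕ) (he : ∀ j, IsEssentialSubseq x (a j) (e j))
    (L : (ℕ → ℝ) → ℝ) (hL : IsBanachLimit L) :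
    (∑ j, (if 0 < a j then a j * lowerWeight (e j) else a j * upperWeight (e j)))
        ≤ L x ∧
    L x ≤ ∑ j, (if 0 < a j then a j * upperWeight (e j) else a j * lowerWeight (e j)) := by
  have he_inj (j : Fin m) : Function.Injective (e j) := (he j).1.injective
  have hterm_bdd (j : Fin m) : IsBddSeq (a j • (range (e j)).indicator 1) :=
    (isBddSeq_indicator_one _).const_smul _
  have hsum_bdd := IsBddSeq.finsetSum Finset.univ fun j _ => hterm_bdd j
  have hnull : Tendsto (x - ∑ j, a j • (range (e j)).indicator 1) atTop (𝓝 0) :=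
    tendsto_sub_sum_indicator_range hinj he_inj (fun j => (he j).2.1)
      (hx.finite_compl_iUnion_range hS.subset he)
  have hLx : L x = ∑ j, a j * L ((range (e j)).indicator 1) := by
    have := hL.apply_eq_of_tendsto (hx.sub hsum_bdd) hnull
    rw [hL.map_sub hx hsum_bdd, sub_eq_zero, hL.map_sum _ fun j _ => hterm_bdd j] at this
    simp only [this, hL.map_smul _ (isBddSeq_indicator_one _)]
  have hbounds (j : Fin m) := ite_mul_le_mul_and_mul_le_ite (a := a j)
    (hL.lowerWeight_le (he_inj j)) (hL.le_upperWeight (he_inj j))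
  rw [hLx]
  exact ⟨Finset.sum_le_sum fun j _ => (hbounds j).1, Finset.sum_le_sum fun j _ => (hbounds j).2⟩
end

section
/- If x is a properly distributed bounded real sequence, then x is almost convergent; moreover, if {s_k} is any sequence of simply distributed bounded real sequences with ‖s_k − x‖_∞ → 0, then for every Banach limit L one has lim_{k→∞} L(s_k) = L(x). -/
open Filter

section Aux

theorem bddSeq_const (c : ℝ) : IsBddSeq (fun _ => c) := ⟨|c|, fun _ => le_rfl⟩

theorem bddSeq_add {u v : ℕ → ℝ} (hu : IsBddSeq u) (hv : IsBddSeq v) :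
    IsBddSeq (u + v) := by
  obtain ⟨C, hC⟩ := hu; obtain ⟨D, hD⟩ := hv
  exact ⟨C + D, fun n => (abs_add_le _ _).trans (add_le_add (hC n) (hD n))⟩

theorem bddSeq_shift {x : ℕ → ℝ} (hx : IsBddSeq x) (k : ℕ) :
    IsBddSeq (fun i => x (i + k)) := by
  obtain ⟨C, hC⟩ := hx; exact ⟨C, fun n => hC _⟩

theorem bddSeq_sumshift {x : ℕ → ℝ} (hx : IsBddSeq x) (n : ℕ) :
    IsBddSeq (fun i => ∑ k ∈ Finset.range n, x (k + i)) := by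
  obtain ⟨C, hC⟩ := hx
  refine ⟨n * C, fun i => ?_⟩
  calc |∑ k ∈ Finset.range n, x (k + i)| ≤ ∑ k ∈ Finset.range n, |x (k + i)| :=
        Finset.abs_sum_le_sum_abs _ _
    _ ≤ ∑ _k ∈ Finset.range n, C := Finset.sum_le_sum (fun k _ => hC _)
    _ = n * C := by simp [mul_comm]

theorem abs_le_supNorm {x : ℕ → ℝ} (hx : IsBddSeq x) (n : ℕ) : |x n| ≤ supNorm x := by
  obtain ⟨C, hC⟩ := hx
  exact le_ciSup ⟨C, by rintro _ ⟨n, rfl⟩; exact hC n⟩ n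

theorem bddSeq_of_finiteRange {s : ℕ → ℝ} (h : (Set.range s).Finite) : IsBddSeq s := by
  obtain ⟨A, hA⟩ := h.bddAbove
  obtain ⟨B, hB⟩ := h.bddBelow
  refine ⟨max A (-B), fun n => abs_le.2 ⟨?_, ?_⟩⟩
  · have h1 := hB (Set.mem_range_self n)
    have h2 : -max A (-B) ≤ -(-B) := neg_le_neg (le_max_right _ _)
    simp only [neg_neg] at h2
    linarith
  · exact (hA (Set.mem_range_self n)).trans (le_max_left _ _)

section BL
variable {L : (ℕ → ℝ) → ℝ}

theorem BL_const (hL : IsBanachLimit L) (c : ℝ) : L (fun _ => c) = c := by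
  have h1 : (fun _ : ℕ => c) = c • (fun _ : ℕ => (1:ℝ)) := by funext i; simp
  rw [h1, hL.2.1 c _ (bddSeq_const 1), hL.2.2.2.2, mul_one]

theorem BL_le (hL : IsBanachLimit L) {z : ℕ → ℝ} (hz : IsBddSeq z) {B : ℝ} (h : ∀ i, z i ≤ B) : L z ≤ B := by
  have hbz : IsBddSeq (fun i => B - z i) := by
    obtain ⟨C, hC⟩ := hz
    exact ⟨|B| + C, fun n => (abs_sub _ _).trans (add_le_add le_rfl (hC n))⟩
  have h0 : 0 ≤ L (fun i => B - z i) := hL.2.2.1 _ hbz (fun n => by linarith [h n])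
  have hadd : L ((fun i => B - z i) + z) = L (fun i => B - z i) + L z :=
    hL.1 _ _ hbz hz
  have he : (fun i => B - z i) + z = (fun _ => B) := by funext i; simp [Pi.add_apply]
  rw [he, BL_const hL] at hadd
  linarith

theorem BL_ge (hL : IsBanachLimit L) {z : ℕ → ℝ} (hz : IsBddSeq z) {B : ℝ} (h : ∀ i, B ≤ z i) : B ≤ L z := by
  have hbz : IsBddSeq (fun i => z i - B) := by
    obtain ⟨C, hC⟩ := hz
    exact ⟨C + |B|, fun n => (abs_sub _ _).trans (add_le_add (hC n) le_rfl)⟩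
  have h0 : 0 ≤ L (fun i => z i - B) := hL.2.2.1 _ hbz (fun n => by linarith [h n])
  have hadd : L ((fun i => z i - B) + (fun _ => B)) = L (fun i => z i - B) + L (fun _ => B) :=
    hL.1 _ _ hbz (bddSeq_const B)
  have he : (fun i => z i - B) + (fun _ => B) = z := by funext i; simp [Pi.add_apply]
  rw [he, BL_const hL] at hadd
  linarith

theorem abs_BL_le (hL : IsBanachLimit L) {z : ℕ → ℝ} (hz : IsBddSeq z) : |L z| ≤ supNorm z := by
  refine abs_le.2 ⟨?_, ?_⟩
  · exact BL_ge hL hz (fun i => neg_le_of_abs_le (abs_le_supNorm hz i))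
  · exact BL_le hL hz (fun i => le_of_abs_le (abs_le_supNorm hz i))

theorem BL_shift (hL : IsBanachLimit L) {x : ℕ → ℝ} (hx : IsBddSeq x) (k : ℕ) :
    L (fun i => x (i + k)) = L x := by
  induction k with
  | zero => simp
  | succ k ih =>
    have h1 := hL.2.2.2.1 (fun j => x (j + k)) (bddSeq_shift hx k)
    have h2 : (fun i => x (i + (k + 1))) = (fun n => x (n + 1 + k)) := by
      funext i; congr 1; omega
    rw [h2]
    rw [show (fun n => x (n + 1 + k)) = (fun n => (fun j => x (j + k)) (n + 1)) from rfl]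
    rw [h1, ih]

theorem BL_sumshift (hL : IsBanachLimit L) {x : ℕ → ℝ} (hx : IsBddSeq x) (n : ℕ) :
    L (fun i => ∑ k ∈ Finset.range n, x (k + i)) = n * L x := by
  induction n with
  | zero =>
    simp only [Finset.range_zero, Finset.sum_empty]
    have h2 : (fun _ : ℕ => (0:ℝ)) = (0:ℝ) • x := by funext i; simp
    rw [h2, hL.2.1 0 x hx]; simp
  | succ n ih =>
    have he : (fun i => ∑ k ∈ Finset.range (n+1), x (k + i)) =
        (fun i => ∑ k ∈ Finset.range n, x (k + i)) + (fun i => x (i + n)) := by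
      funext i
      simp [Finset.sum_range_succ, Pi.add_apply]
      congr 1
      omega
    rw [he, hL.1 _ _ (bddSeq_sumshift hx n) (bddSeq_shift hx n), ih, BL_shift hL hx]
    push_cast; ring

end BL
end Aux
noncomputable def myAvg (x : ℕ → ℝ) (n i : ℕ) : ℝ := (∑ k ∈ Finset.range n, x (k + i)) / n

open Classical in
theorem seqCount_eq_sum (x : ℕ → ℝ) (S : Set ℝ) (i n : ℕ) :
    (seqCount x S i n : ℝ) = ∑ k ∈ Finset.range n, if x (k + i) ∈ S then (1:ℝ) else 0 := by
  classical
  have hset : {k | k < n ∧ x (k + i) ∈ S} =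
      ↑((Finset.range n).filter (fun k => x (k + i) ∈ S)) := by
    ext k; simp [Finset.mem_filter]
  rw [seqCount, hset, Set.ncard_coe_finset, Finset.card_filter]
  push_cast
  exact Finset.sum_congr rfl (fun k _ => by split <;> simp)

theorem avg_uniform (x : ℕ → ℝ) (hx : IsBddSeq x) (hpd : ProperlyDistributed x) :
    ∀ ε : ℝ, 0 < ε → ∃ (c' : ℝ) (N : ℕ), 1 ≤ N ∧ ∀ n, N ≤ n → ∀ i, |myAvg x n i - c'| ≤ ε := by
  classical
  intro ε hε
  set M := supNorm x with hMdef
  have hM : ∀ n, |x n| ≤ M := abs_le_supNorm hx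
  have hM0 : 0 ≤ M := (abs_nonneg _).trans (hM 0)
  set δ := ε / 2 with hδdef
  have hδ : 0 < δ := by positivity
  set m : ℕ := ⌈2 * M / δ⌉₊ + 1 with hmdef
  have hm0 : 0 < (m : ℝ) := by positivity
  set a : ℕ → ℝ := fun j => -M + j * δ with hadef
  have ha_succ : ∀ j : ℕ, a (j + 1) = a j + δ := by
    intro j; simp only [hadef]; push_cast; ring
  have hamono : ∀ p q : ℕ, p ≤ q → a p ≤ a q := by
    intro p q h
    have : (p : ℝ) ≤ q := Nat.cast_le.2 h
    simp only [hadef]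
    nlinarith [hδ.le]
  have hceil : 2 * M ≤ (⌈2 * M / δ⌉₊ : ℝ) * δ := by
    have := Nat.le_ceil (2 * M / δ)
    calc 2 * M = (2 * M / δ) * δ := by field_simp
      _ ≤ _ := mul_le_mul_of_nonneg_right this hδ.le
  have hmδ : 2 * M < (m : ℝ) * δ := by
    have : ((m : ℝ)) = (⌈2 * M / δ⌉₊ : ℝ) + 1 := by push_cast [hmdef]; ring
    rw [this]; nlinarith
  set S : ℕ → Set ℝ := fun j => Set.Icc (-M) M ∩ Set.Ico (a j) (a (j + 1)) with hSdef
  -- cover lemma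
  have hcover : ∀ t : ℝ, -M ≤ t → t ≤ M →
      ∃ j, j < m ∧ t ∈ S j ∧ ∀ j', j' < m → t ∈ S j' → j' = j := by
    intro t ht1 ht2
    set j : ℕ := ⌊(t + M) / δ⌋₊ with hjdef
    have h0 : (0:ℝ) ≤ (t + M) / δ := div_nonneg (by linarith) hδ.le
    have h1 : (j : ℝ) ≤ (t + M) / δ := Nat.floor_le h0
    have h2 : (t + M) / δ < j + 1 := Nat.lt_floor_add_one _
    have h1' : (j : ℝ) * δ ≤ t + M := by
      calc (j:ℝ) * δ ≤ ((t + M)/δ) * δ := mul_le_mul_of_nonneg_right h1 hδ.le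
        _ = t + M := by field_simp
    have h2' : t + M < ((j:ℝ) + 1) * δ := by
      calc t + M = ((t + M)/δ) * δ := by field_simp
        _ < ((j:ℝ) + 1) * δ := by
            exact mul_lt_mul_of_pos_right h2 hδ
    have hjm : j < m := by
      have hlt : (j : ℝ) * δ < (m : ℝ) * δ := by linarith
      have hjr : (j : ℝ) < m := lt_of_mul_lt_mul_right hlt hδ.le
      exact_mod_cast hjr
    have hmem : t ∈ S j := by
      constructor
      · exact ⟨ht1, ht2⟩
      · constructor
        · simp only [hadef]; linarith
        · simp only [hadef]; push_cast; linarith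
    refine ⟨j, hjm, hmem, ?_⟩
    intro j' _ hj'
    have hj'lo : a j' ≤ t := hj'.2.1
    have hj'hi : t < a (j' + 1) := hj'.2.2
    rcases lt_trichotomy j' j with h | h | h
    · exfalso
      have : a (j' + 1) ≤ a j := hamono _ _ (by omega)
      have hlo : a j ≤ t := hmem.2.1
      linarith
    · exact h
    · exfalso
      have : a (j + 1) ≤ a j' := hamono _ _ (by omega)
      have hhi : t < a (j + 1) := hmem.2.2
      linarith
  -- weights from proper distribution
  have hwex : ∀ j : ℕ, ∃ w, HasSetWeight x (S j) w := by
    intro j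
    refine hpd (S j) (measurableSet_Icc.inter measurableSet_Ico) ?_
    exact Set.inter_subset_left
  choose w hw using hwex
  set A : ℝ := M + 2 * δ with hAdef
  have hA0 : 0 ≤ A := by simp only [hAdef]; linarith
  have hmup : (m : ℝ) * δ < 2 * M + 2 * δ := by
    have hc : (⌈2 * M / δ⌉₊ : ℝ) < 2 * M / δ + 1 :=
      Nat.ceil_lt_add_one (by positivity)
    have hmr : ((m : ℝ)) = (⌈2 * M / δ⌉₊ : ℝ) + 1 := by push_cast [hmdef]; ring
    have h2 : (m : ℝ) * δ < (2 * M / δ + 2) * δ := by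
      rw [hmr]; apply mul_lt_mul_of_pos_right _ hδ; linarith
    have h3 : (2 * M / δ + 2) * δ = 2 * M + 2 * δ := by field_simp
    linarith
  have haabs : ∀ j : ℕ, j ≤ m → |a j| ≤ A := by
    intro j hj
    have h1 : a 0 ≤ a j := hamono 0 j (Nat.zero_le _)
    have h1' : a 0 = -M := by simp [hadef]
    have h2 : a j ≤ a m := hamono j m hj
    have h3 : a m = -M + m * δ := rfl
    refine abs_le.2 ⟨by simp only [hAdef]; linarith, by simp only [hAdef]; linarith⟩
  set η := δ / (m * (A + 1)) with hηdef
  have hη : 0 < η := div_pos hδ (mul_pos hm0 (by linarith))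
  have hNex : ∀ j : ℕ, ∃ N, ∀ n ≥ N, ∀ i, |(seqCount x (S j) i n : ℝ) / n - w j| < η :=
    fun j => hw j η hη
  choose N hN using hNex
  set N₀ := max 1 ((Finset.range m).sup N) with hN₀def
  refine ⟨∑ j ∈ Finset.range m, a j * w j, N₀, le_max_left _ _, ?_⟩
  intro n hn i
  have hn1 : 1 ≤ n := le_trans (le_max_left _ _) hn
  have hnR : (0:ℝ) < n := by exact_mod_cast Nat.lt_of_lt_of_le Nat.zero_lt_one hn1
  have hnN : ∀ j : ℕ, j < m → N j ≤ n := fun j hj =>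
    le_trans (le_trans (Finset.le_sup (Finset.mem_range.2 hj)) (le_max_right _ _)) hn
  have hcov' : ∀ k : ℕ, ∃ j, j < m ∧ x (k + i) ∈ S j ∧
      ∀ j', j' < m → x (k + i) ∈ S j' → j' = j :=
    fun k => hcover (x (k + i)) (neg_le_of_abs_le (hM _)) (le_of_abs_le (hM _))
  choose J hJlt hJmem hJuniq using hcov'
  have key1 : ∀ k : ℕ, (∑ j ∈ Finset.range m, if x (k + i) ∈ S j then (1:ℝ) else 0) = 1 := by
    intro k
    rw [Finset.sum_eq_single (J k)]
    · rw [if_pos (hJmem k)]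
    · intro j hj hne
      rw [if_neg]
      intro hmem'; exact hne (hJuniq k j (Finset.mem_range.1 hj) hmem')
    · intro hnotmem; exact absurd (Finset.mem_range.2 (hJlt k)) hnotmem
  have key2 : ∀ k : ℕ, (∑ j ∈ Finset.range m, if x (k + i) ∈ S j then a j else 0) = a (J k) := by
    intro k
    rw [Finset.sum_eq_single (J k)]
    · rw [if_pos (hJmem k)]
    · intro j hj hne
      rw [if_neg]
      intro hmem'; exact hne (hJuniq k j (Finset.mem_range.1 hj) hmem')
    · intro hnotmem; exact absurd (Finset.mem_range.2 (hJlt k)) hnotmem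
  have e1 : ∑ j ∈ Finset.range m, a j * (seqCount x (S j) i n : ℝ) =
      ∑ k ∈ Finset.range n, a (J k) := by
    have : ∀ j, a j * (seqCount x (S j) i n : ℝ) =
        ∑ k ∈ Finset.range n, (if x (k + i) ∈ S j then a j else 0) := by
      intro j
      rw [seqCount_eq_sum, Finset.mul_sum]
      exact Finset.sum_congr rfl (fun k _ => by split <;> simp)
    rw [Finset.sum_congr rfl (fun j _ => this j), Finset.sum_comm]
    exact Finset.sum_congr rfl (fun k _ => key2 k)
  have approx1 : |(∑ k ∈ Finset.range n, x (k + i)) -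
      ∑ j ∈ Finset.range m, a j * (seqCount x (S j) i n : ℝ)| ≤ n * δ := by
    rw [e1, ← Finset.sum_sub_distrib]
    calc |∑ k ∈ Finset.range n, (x (k + i) - a (J k))|
        ≤ ∑ k ∈ Finset.range n, |x (k + i) - a (J k)| := Finset.abs_sum_le_sum_abs _ _
      _ ≤ ∑ _k ∈ Finset.range n, δ := by
          refine Finset.sum_le_sum (fun k _ => ?_)
          have hlo : a (J k) ≤ x (k + i) := (hJmem k).2.1
          have hhi : x (k + i) < a (J k + 1) := (hJmem k).2.2
          rw [ha_succ] at hhi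
          exact abs_le.2 ⟨by linarith, by linarith⟩
      _ = n * δ := by simp [mul_comm]
  have h1 : |myAvg x n i - ∑ j ∈ Finset.range m, a j * ((seqCount x (S j) i n : ℝ) / n)| ≤ δ := by
    have he : ∑ j ∈ Finset.range m, a j * ((seqCount x (S j) i n : ℝ) / n) =
        (∑ j ∈ Finset.range m, a j * (seqCount x (S j) i n : ℝ)) / n := by
      rw [Finset.sum_div]
      exact Finset.sum_congr rfl (fun j _ => (mul_div_assoc _ _ _).symm)
    rw [he, myAvg, div_sub_div_same, abs_div, abs_of_pos hnR]
    rw [div_le_iff₀ hnR]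
    calc |(∑ k ∈ Finset.range n, x (k + i)) -
        ∑ j ∈ Finset.range m, a j * (seqCount x (S j) i n : ℝ)| ≤ n * δ := approx1
      _ = δ * n := by ring
  have h2 : |(∑ j ∈ Finset.range m, a j * ((seqCount x (S j) i n : ℝ) / n)) -
      ∑ j ∈ Finset.range m, a j * w j| ≤ δ := by
    rw [← Finset.sum_sub_distrib]
    calc |∑ j ∈ Finset.range m, (a j * ((seqCount x (S j) i n : ℝ) / n) - a j * w j)|
        ≤ ∑ j ∈ Finset.range m, |a j * ((seqCount x (S j) i n : ℝ) / n) - a j * w j| :=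
          Finset.abs_sum_le_sum_abs _ _
      _ ≤ ∑ _j ∈ Finset.range m, A * η := by
          refine Finset.sum_le_sum (fun j hj => ?_)
          have hjm : j < m := Finset.mem_range.1 hj
          rw [← mul_sub, abs_mul]
          exact mul_le_mul (haabs j hjm.le) (le_of_lt (hN j n (hnN j hjm) i))
            (abs_nonneg _) hA0
      _ = m * (A * η) := by simp [mul_comm]
      _ ≤ δ := by
          rw [hηdef]
          rw [show (m:ℝ) * (A * (δ / (↑m * (A + 1)))) = δ * ((↑m * A) / (↑m * (A + 1))) by
            field_simp]
          have hle : ((m:ℝ) * A) / ((m:ℝ) * (A + 1)) ≤ 1 := by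
            rw [div_le_one (mul_pos hm0 (by linarith))]
            nlinarith
          nlinarith
  calc |myAvg x n i - ∑ j ∈ Finset.range m, a j * w j|
      ≤ |myAvg x n i - ∑ j ∈ Finset.range m, a j * ((seqCount x (S j) i n : ℝ) / n)| +
        |(∑ j ∈ Finset.range m, a j * ((seqCount x (S j) i n : ℝ) / n)) -
          ∑ j ∈ Finset.range m, a j * w j| := abs_sub_le _ _ _
    _ ≤ δ + δ := add_le_add h1 h2
    _ = ε := by rw [hδdef]; ring

theorem bddSeq_sub {u v : ℕ → ℝ} (hu : IsBddSeq u) (hv : IsBddSeq v) :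
    IsBddSeq (fun n => u n - v n) := by
  obtain ⟨C, hC⟩ := hu; obtain ⟨D, hD⟩ := hv
  exact ⟨C + D, fun n => (abs_sub _ _).trans (add_le_add (hC n) (hD n))⟩

theorem bddSeq_avg {x : ℕ → ℝ} (hx : IsBddSeq x) (n : ℕ) :
    IsBddSeq (fun i => myAvg x n i) := by
  obtain ⟨C, hC⟩ := hx
  have hC0 : 0 ≤ C := le_trans (abs_nonneg _) (hC 0)
  refine ⟨C, fun i => ?_⟩
  rcases Nat.eq_zero_or_pos n with h | h
  · simp [myAvg, h, hC0]
  · have hnR : (0:ℝ) < n := by exact_mod_cast h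
    simp only [myAvg]
    rw [abs_div, abs_of_pos hnR, div_le_iff₀ hnR]
    calc |∑ k ∈ Finset.range n, x (k + i)| ≤ ∑ k ∈ Finset.range n, |x (k + i)| :=
          Finset.abs_sum_le_sum_abs _ _
      _ ≤ ∑ _k ∈ Finset.range n, C := Finset.sum_le_sum (fun k _ => hC _)
      _ = C * n := by simp [mul_comm]

theorem BL_avg {L : (ℕ → ℝ) → ℝ} (hL : IsBanachLimit L) {x : ℕ → ℝ} (hx : IsBddSeq x)
    {n : ℕ} (hn : 1 ≤ n) : L (fun i => myAvg x n i) = L x := by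
  have hnR : ((n:ℝ)) ≠ 0 := by
    have : 0 < (n:ℝ) := by exact_mod_cast hn
    linarith
  have he : (fun i => myAvg x n i) =
      ((n:ℝ)⁻¹) • (fun i => ∑ k ∈ Finset.range n, x (k + i)) := by
    funext i
    simp only [myAvg, Pi.smul_apply, smul_eq_mul]
    rw [div_eq_inv_mul]
  rw [he, hL.2.1 _ _ (bddSeq_sumshift hx n), BL_sumshift hL hx n]
  field_simp

/-- A properly distributed bounded sequence `x` is almost convergent; moreover,
if `s k` are simply distributed sequences with `‖s k - x‖∞ → 0`, then for every
Banach limit `L` one has `L (s k) → L x`. -/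
theorem properlyDistributed_almostConvergent (x : ℕ → ℝ) (hx : IsBddSeq x)
    (hpd : ProperlyDistributed x) :
    AlmostConvergent x ∧
      ∀ s : ℕ → ℕ → ℝ, (∀ k, SimplyDistributed (s k)) →
        Filter.Tendsto (fun k => supNorm (fun n => s k n - x n))
          Filter.atTop (nhds 0) →
        ∀ L : (ℕ → ℝ) → ℝ, IsBanachLimit L →
          Filter.Tendsto (fun k => L (s k)) Filter.atTop (nhds (L x)) := by
  constructor
  · -- almost convergence
    set f : ℕ → ℝ := fun n => myAvg x n 0 with hfdef
    have hcs : CauchySeq f := by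
      rw [Metric.cauchySeq_iff]
      intro ε hε
      obtain ⟨c', N, hN1, hN⟩ := avg_uniform x hx hpd (ε / 3) (by linarith)
      refine ⟨N, fun p hp q hq => ?_⟩
      have h1 := hN p hp 0
      have h2 := hN q hq 0
      rw [Real.dist_eq]
      calc |f p - f q| ≤ |f p - c'| + |c' - f q| := abs_sub_le _ _ _
        _ ≤ ε / 3 + ε / 3 := add_le_add h1 (by rw [abs_sub_comm]; exact h2)
        _ < ε := by linarith
    obtain ⟨c, hc⟩ := cauchySeq_tendsto_of_complete hcs
    have key : ∀ ε : ℝ, 0 < ε → ∃ N : ℕ, 1 ≤ N ∧ ∀ n, N ≤ n → ∀ i, |myAvg x n i - c| ≤ ε := by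
      intro ε hε
      obtain ⟨c', N₁, hN₁1, hN₁⟩ := avg_uniform x hx hpd (ε / 3) (by linarith)
      obtain ⟨N₂, hN₂⟩ := (Metric.tendsto_atTop).1 hc (ε / 3) (by linarith)
      set n₁ := max N₁ N₂ with hn₁
      have ha : |c' - c| ≤ 2 * ε / 3 := by
        have h1 := hN₁ n₁ (le_max_left _ _) 0
        have h2 := hN₂ n₁ (le_max_right _ _)
        rw [Real.dist_eq] at h2
        calc |c' - c| ≤ |c' - f n₁| + |f n₁ - c| := abs_sub_le _ _ _
          _ ≤ ε / 3 + ε / 3 := add_le_add (by rw [abs_sub_comm]; exact h1) h2.le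
          _ = 2 * ε / 3 := by ring
      refine ⟨N₁, hN₁1, fun n hn i => ?_⟩
      calc |myAvg x n i - c| ≤ |myAvg x n i - c'| + |c' - c| := abs_sub_le _ _ _
        _ ≤ ε / 3 + 2 * ε / 3 := add_le_add (hN₁ n hn i) ha
        _ = ε := by ring
    refine ⟨c, fun L hL => ?_⟩
    have hclose : ∀ ε : ℝ, 0 < ε → |L x - c| ≤ ε := by
      intro ε hε
      obtain ⟨N, hN1, hN⟩ := key ε hε
      have havg := hN N le_rfl
      have hLb : IsBddSeq (fun i => myAvg x N i) := bddSeq_avg hx N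
      have hle : L x ≤ c + ε := by
        rw [← BL_avg hL hx hN1]
        exact BL_le hL hLb (fun i => by have := (abs_le.1 (havg i)).2; linarith)
      have hge : c - ε ≤ L x := by
        rw [← BL_avg hL hx hN1]
        exact BL_ge hL hLb (fun i => by have := (abs_le.1 (havg i)).1; linarith)
      exact abs_le.2 ⟨by linarith, by linarith⟩
    by_contra hne
    have h0 : 0 < |L x - c| := abs_pos.2 (sub_ne_zero.2 hne)
    have := hclose (|L x - c| / 2) (by linarith)
    linarith
  · intro s hs hsup L hL
    have hdiff : ∀ k, IsBddSeq (fun n => s k n - x n) :=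
      fun k => bddSeq_sub (bddSeq_of_finiteRange (hs k).1) hx
    have hLk : ∀ k, L (s k) - L x = L (fun n => s k n - x n) := by
      intro k
      have he : (fun n => s k n - x n) + x = s k := by funext n; simp [Pi.add_apply]
      have := hL.1 _ _ (hdiff k) hx
      rw [he] at this
      linarith
    have hb : ∀ k, dist (L (s k)) (L x) ≤ supNorm (fun n => s k n - x n) := by
      intro k
      rw [Real.dist_eq, hLk k]
      exact abs_BL_le hL (hdiff k)
    exact tendsto_iff_dist_tendsto_zero.2
      (squeeze_zero (fun k => dist_nonneg) hb hsup)
end
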